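/- arXiv:2210.09751 — 3 statements merged into one kernel-verified Lean document; each statement's English description precedes it below -/
import Mathlib

section
/- For every homeomorphism f : [0,1] → [0,1], the polynomial entropy of the induced map on the hyperspace of subcontinua satisfies h_pol(C(f)) = 2 · h_pol(f). -/
open Filter Topology TopologicalSpace Set
open scoped ENNReal

/-- The dynamic distance `d_n^f(x,y) = max_{0 ≤ k ≤ n-1} d(f^k x, f^k y)`. -/
noncomputable def dynDist {X : Type*} [MetricSpace X] (f : X → X) (n : ℕ) (x y : X) : ℝ :=
  ((Finset.range n).sup fun k => nndist (f^[k] x) (f^[k] y) : NNReal)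

/-- A finite set `E` is `(n,ε)`-separated for `f`. -/
def IsDynSeparated {X : Type*} [MetricSpace X] (f : X → X) (n : ℕ) (ε : ℝ) (E : Finset X) :
    Prop :=
  ∀ x ∈ E, ∀ y ∈ E, x ≠ y → ε ≤ dynDist f n x y

/-- `S(n,ε;Y)`: the maximal cardinality of an `(n,ε)`-separated subset of `Y`. -/
noncomputable def maxSep {X : Type*} [MetricSpace X] (f : X → X) (Y : Set X) (n : ℕ) (ε : ℝ) :
    ℕ :=
  sSup {m : ℕ | ∃ E : Finset X, ↑E ⊆ Y ∧ E.card = m ∧ IsDynSeparated f n ε E}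

/-- The polynomial entropy `h_pol(f;Y)`.  Since `ε ↦ S(n,ε;Y)` is nonincreasing, the limit as
`ε → 0` of the `limsup` coincides with the supremum over `ε > 0`. -/
noncomputable def polEnt {X : Type*} [MetricSpace X] (f : X → X) (Y : Set X) : ℝ≥0∞ :=
  ⨆ (ε : ℝ) (_ : 0 < ε),
    Filter.atTop.limsup fun n : ℕ =>
      ENNReal.ofReal (Real.log (maxSep f Y n ε) / Real.log n)

/-- The set of non-wandering points of `f`. -/
def nonWandering {X : Type*} [TopologicalSpace X] (f : X → X) : Set X :=
  {p | ∀ U ∈ nhds p, ∃ n : ℕ, 1 ≤ n ∧ (f^[n] '' U ∩ U).Nonempty}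

/-- The induced map `2^f` on the hyperspace of nonempty closed (= compact) subsets of a
compact metric space. -/
noncomputable def induced2 {X : Type*} [TopologicalSpace X] (f : X → X) (hf : Continuous f) :
    NonemptyCompacts X → NonemptyCompacts X :=
  fun A => ⟨⟨f '' A, A.isCompact.image hf⟩, A.nonempty.image f⟩

/-- The hyperspace `C(X)` of subcontinua (nonempty closed connected subsets) of `X`. -/
abbrev Subcontinua (X : Type*) [TopologicalSpace X] :=
  {A : NonemptyCompacts X // IsConnected (A : Set X)}

/-- The induced map `C(f)` on the hyperspace of subcontinua. -/
noncomputable def inducedC {X : Type*} [TopologicalSpace X] (f : X → X) (hf : Continuous f) :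
    Subcontinua X → Subcontinua X :=
  fun A => ⟨induced2 f hf A.1, A.2.image f hf.continuousOn⟩

/-- The `k`-fold symmetric product `X^{*k}`: nonempty subsets of `X` with at most `k` points. -/
abbrev SymProd (X : Type*) [TopologicalSpace X] (k : ℕ) :=
  {A : NonemptyCompacts X // (A : Set X).Finite ∧ (A : Set X).ncard ≤ k}

/-- The induced map `f^{*k}` on the `k`-fold symmetric product. -/
noncomputable def inducedSym {X : Type*} [TopologicalSpace X] (f : X → X) (hf : Continuous f)
    (k : ℕ) : SymProd X k → SymProd X k :=
  fun A => ⟨induced2 f hf A.1, A.2.1.image f, le_trans (Set.ncard_image_le A.2.1) A.2.2⟩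

/-- Sets `U 0, …, U (L-1)` are mutually singular for `f`. -/
def MutuallySingularSets {X : Type*} [TopologicalSpace X] (f : X → X) {L : ℕ}
    (U : Fin L → Set X) : Prop :=
  ∀ M : ℕ, ∃ x : X, ∃ n : Fin L → ℕ, (∀ j, 1 ≤ n j ∧ f^[n j] x ∈ U j) ∧
    ∀ i j, i ≠ j → (M : ℤ) < |(n i : ℤ) - (n j : ℤ)|

/-- A finite set `S ⊆ X \ NW(f)` is singular: it consists of mutually singular points, i.e.
every family of respective neighbourhoods of its points is mutually singular. -/
def IsSingularSet {X : Type*} [TopologicalSpace X] (f : X → X) (S : Set X) : Prop :=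
  S.Finite ∧ (∀ x ∈ S, x ∉ nonWandering f) ∧
  ∀ (L : ℕ) (x : Fin L → X), Function.Injective x → Set.range x = S →
    ∀ U : Fin L → Set X, (∀ j, U j ∈ nhds (x j)) → MutuallySingularSets f U

/-- The set of codings of length-`n` orbit segments of points of `Y` relative to the family
`F`, where the letter `none` stands for `Y_∞ = Y \ ⋃ F`. -/
def codings {X : Type*} (f : X → X) {L : ℕ} (F : Fin L → Set X) (Y : Set X) (n : ℕ) :
    Set (Fin n → Option (Fin L)) :=
  {w | ∃ x ∈ Y, ∀ j : Fin n, match w j with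
    | some i => f^[(j : ℕ)] x ∈ F i
    | none => f^[(j : ℕ)] x ∈ Y \ ⋃ i, F i}

/-- The polynomial entropy of `f` on `Y` relative to the family `F`:
`limsup_n log #A_n(F;Y) / log n`. -/
noncomputable def polEntRel {X : Type*} (f : X → X) {L : ℕ} (F : Fin L → Set X) (Y : Set X) :
    ℝ≥0∞ :=
  Filter.atTop.limsup fun n : ℕ =>
    ENNReal.ofReal (Real.log ((codings f F Y n).ncard) / Real.log n)

/-- The circle is connected. -/
theorem circle_isConnected_univ : IsConnected (Set.univ : Set Circle) := by
  have hsurj : Function.Surjective Circle.exp := fun z => ⟨Complex.arg z, Circle.exp_arg z⟩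
  have : ConnectedSpace Circle :=
    { toPreconnectedSpace := ⟨by
        rw [← Set.image_univ_of_surjective hsurj]
        exact isPreconnected_univ.image _ Circle.exp.continuous.continuousOn⟩,
      toNonempty := ⟨1⟩ }
  exact isConnected_univ

/-!
Every subcontinuum of `[0,1]` is an interval `[a,b]`, and `A ↦ (a,b)` is an isometry from `C([0,1])`
onto the half-square `{a ≤ b}` with the max metric. Iterates of a homeomorphism are monotone, so
`f^k [a,b]` has endpoints `(f^k a, f^k b)` up to order: `C(f)` has the same dynamical distances as
`f × f` on the half-square. Separated sets of `f × f` are, up to halving `ε`, products of separated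
sets of `f`, and swapping coordinates moves half of any of them into the half-square. Hence
`S_f(n,ε)² ≤ 2 S_{C(f)}(n,ε)` and `S_{C(f)}(n,ε) ≤ S_f(n,ε/2)²`, and taking `log / log n` doubles
the exponent.
-/

open Metric

section HausdorffIcc

variable {a b c d : ℝ}

lemma exists_dist_le_of_mem_Icc (hcd : c ≤ d) {x : ℝ} (hx : x ∈ Icc a b) :
    ∃ y ∈ Icc c d, dist x y ≤ max |a - c| |b - d| := by
  refine ⟨max c (min x d), ⟨le_max_left _ _, max_le hcd (min_le_right _ _)⟩, ?_⟩
  rw [Real.dist_eq]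
  grind

lemma sub_le_hausdorffDist_Icc_left (hab : a ≤ b) (hcd : c ≤ d) :
    c - a ≤ hausdorffDist (Icc a b) (Icc c d) := by
  refine le_trans ?_ (infDist_le_hausdorffDist_of_mem (left_mem_Icc.2 hab) <|
    hausdorffEDist_ne_top_of_nonempty_of_bounded (nonempty_Icc.2 hab) (nonempty_Icc.2 hcd)
      (isBounded_Icc a b) (isBounded_Icc c d))
  refine (le_infDist (nonempty_Icc.2 hcd)).2 fun y hy => ?_
  rw [Real.dist_eq, abs_sub_comm]
  exact (sub_le_sub_right hy.1 a).trans (le_abs_self _)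

lemma sub_le_hausdorffDist_Icc_right (hab : a ≤ b) (hcd : c ≤ d) :
    b - d ≤ hausdorffDist (Icc a b) (Icc c d) := by
  refine le_trans ?_ (infDist_le_hausdorffDist_of_mem (right_mem_Icc.2 hab) <|
    hausdorffEDist_ne_top_of_nonempty_of_bounded (nonempty_Icc.2 hab) (nonempty_Icc.2 hcd)
      (isBounded_Icc a b) (isBounded_Icc c d))
  refine (le_infDist (nonempty_Icc.2 hcd)).2 fun y hy => ?_
  rw [Real.dist_eq]
  exact (sub_le_sub_left hy.2 b).trans (le_abs_self _)

theorem Real.hausdorffDist_Icc (hab : a ≤ b) (hcd : c ≤ d) :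
    hausdorffDist (Icc a b) (Icc c d) = max |a - c| |b - d| := by
  refine le_antisymm (hausdorffDist_le_of_mem_dist (le_max_of_le_left (abs_nonneg _))
    (fun x hx => exists_dist_le_of_mem_Icc hcd hx) fun x hx => ?_) ?_
  · rw [abs_sub_comm a, abs_sub_comm b]
    exact exists_dist_le_of_mem_Icc hab hx
  · have h₁ := sub_le_hausdorffDist_Icc_left hab hcd
    have h₂ := sub_le_hausdorffDist_Icc_right hab hcd
    have h₃ := sub_le_hausdorffDist_Icc_left hcd hab
    have h₄ := sub_le_hausdorffDist_Icc_right hcd hab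
    rw [hausdorffDist_comm] at h₃ h₄
    exact max_le (abs_sub_le_iff.2 ⟨h₃, h₁⟩) (abs_sub_le_iff.2 ⟨h₂, h₄⟩)

theorem hausdorffDist_Icc_of_ordConnected {s : Set ℝ} [OrdConnected s] {a b c d : s}
    (hab : a ≤ b) (hcd : c ≤ d) :
    hausdorffDist (Icc a b) (Icc c d) = max (dist a c) (dist b d) := by
  rw [← hausdorffDist_image isometry_subtype_coe, image_subtype_val_Icc, image_subtype_val_Icc,
    Real.hausdorffDist_Icc hab hcd, Subtype.dist_eq, Subtype.dist_eq, Real.dist_eq, Real.dist_eq]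

end HausdorffIcc

section DynamicSeparation

variable {X Y : Type*} [MetricSpace X] [MetricSpace Y] {g : X → X} {h : Y → Y} {n : ℕ} {ε : ℝ}

lemma dynDist_eq_dist_pi (g : X → X) (n : ℕ) (x y : X) :
    dynDist g n x y = dist (fun k : Fin n => g^[k] x) (fun k : Fin n => g^[k] y) := by
  rw [dynDist, dist_pi_def, Finset.sup_fin_univ (fun k => nndist (g^[k] x) (g^[k] y))]

lemma dynDist_self (x : X) : dynDist g n x x = 0 := by
  rw [dynDist_eq_dist_pi, dist_self]

lemma dynDist_comm (x y : X) : dynDist g n x y = dynDist g n y x := by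
  rw [dynDist_eq_dist_pi, dynDist_eq_dist_pi, dist_comm]

lemma dynDist_triangle (x y z : X) : dynDist g n x z ≤ dynDist g n x y + dynDist g n y z := by
  simp only [dynDist_eq_dist_pi]
  exact dist_triangle _ _ _

lemma dynDist_lt_of_lt_half {x y c : X} (hx : dynDist g n x c < ε / 2)
    (hy : dynDist g n y c < ε / 2) : dynDist g n x y < ε := by
  linarith [dynDist_triangle (g := g) (n := n) x c y, dynDist_comm (g := g) (n := n) c y]

lemma dynDist_congr {x y : X} {x' y' : Y}
    (H : ∀ k < n, dist (g^[k] x) (g^[k] y) = dist (h^[k] x') (h^[k] y')) :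
    dynDist g n x y = dynDist h n x' y' := by
  unfold dynDist
  congr 1
  exact Finset.sup_congr rfl fun k hk => NNReal.eq <| by
    rw [coe_nndist, coe_nndist]
    exact H k (Finset.mem_range.1 hk)

lemma dynDist_prodMap (p q : X × Y) :
    dynDist (Prod.map g h) n p q = max (dynDist g n p.1 q.1) (dynDist h n p.2 q.2) := by
  unfold dynDist
  rw [← NNReal.coe_max, ← Finset.sup_sup]
  simp only [Prod.map_iterate]
  rfl

lemma dynDist_prodMap_swap (p q : X × X) :
    dynDist (Prod.map g g) n p.swap q.swap = dynDist (Prod.map g g) n p q := by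
  rw [dynDist_prodMap, dynDist_prodMap, max_comm]
  rfl

lemma exists_card_le_of_pairwise_le_dist [CompactSpace X] (hε : 0 < ε) :
    ∃ N : ℕ, ∀ E : Finset X, (E : Set X).Pairwise (fun x y => ε ≤ dist x y) → E.card ≤ N := by
  obtain ⟨t, -, ht, hcover⟩ := finite_cover_balls_of_compact (isCompact_univ (X := X)) (half_pos hε)
  choose c hct hc using fun x => mem_iUnion₂.1 (hcover (mem_univ x))
  refine ⟨ht.toFinset.card, fun E hE => Finset.card_le_card_of_injOn c
    (fun x _ => ht.mem_toFinset.2 (hct x)) fun x hx y hy hxy => ?_⟩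
  by_contra hne
  have hx' := mem_ball.1 (hc x)
  have hy' := mem_ball'.1 (hc y)
  rw [hxy] at hx'
  linarith [hE hx hy hne, dist_triangle x (c y) y]

def sepCards (g : X → X) (s : Set X) (n : ℕ) (ε : ℝ) : Set ℕ :=
  {m | ∃ E : Finset X, ↑E ⊆ s ∧ E.card = m ∧ IsDynSeparated g n ε E}

lemma zero_mem_sepCards (g : X → X) (s : Set X) (n : ℕ) (ε : ℝ) : 0 ∈ sepCards g s n ε :=
  ⟨∅, by simp, rfl, by simp [IsDynSeparated]⟩

lemma bddAbove_sepCards [CompactSpace X] (g : X → X) (s : Set X) (n : ℕ) (hε : 0 < ε) :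
    BddAbove (sepCards g s n ε) := by
  classical
  obtain ⟨N, hN⟩ := exists_card_le_of_pairwise_le_dist (X := Fin n → X) hε
  refine ⟨N, ?_⟩
  rintro _ ⟨E, -, rfl, hE⟩
  have hsep : ∀ x ∈ E, ∀ y ∈ E, x ≠ y →
      ε ≤ dist (fun k : Fin n => g^[k] x) (fun k : Fin n => g^[k] y) := fun x hx y hy hxy =>
    dynDist_eq_dist_pi g n x y ▸ hE x hx y hy hxy
  have hinj : InjOn (fun x (k : Fin n) => g^[k] x) E := fun x hx y hy hxy => by
    by_contra hne
    linarith [hsep x hx y hy hne, dist_eq_zero.2 hxy]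
  rw [← Finset.card_image_of_injOn hinj]
  refine hN _ ?_
  simp only [Finset.coe_image]
  rintro _ ⟨x, hx, rfl⟩ _ ⟨y, hy, rfl⟩ hne
  exact hsep x hx y hy fun hxy => hne (by rw [hxy])

lemma IsDynSeparated.subset {E F : Finset X} (hE : IsDynSeparated g n ε E) (hFE : F ⊆ E) :
    IsDynSeparated g n ε F :=
  fun x hx y hy => hE x (hFE hx) y (hFE hy)

lemma card_le_maxSep [CompactSpace X] {s : Set X} {E : Finset X} (hε : 0 < ε) (hEs : ↑E ⊆ s)
    (hE : IsDynSeparated g n ε E) : E.card ≤ maxSep g s n ε :=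
  le_csSup (bddAbove_sepCards g s n hε) ⟨E, hEs, rfl, hE⟩

lemma maxSep_le {s : Set X} {B : ℕ}
    (H : ∀ E : Finset X, ↑E ⊆ s → IsDynSeparated g n ε E → E.card ≤ B) : maxSep g s n ε ≤ B :=
  csSup_le ⟨0, zero_mem_sepCards g s n ε⟩ <| by
    rintro _ ⟨E, hEs, rfl, hE⟩
    exact H E hEs hE

lemma exists_isDynSeparated_card_eq_maxSep [CompactSpace X] (g : X → X) (s : Set X) (n : ℕ)
    (hε : 0 < ε) : ∃ E : Finset X, ↑E ⊆ s ∧ E.card = maxSep g s n ε ∧ IsDynSeparated g n ε E :=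
  Nat.sSup_mem ⟨0, zero_mem_sepCards g s n ε⟩ (bddAbove_sepCards g s n hε)

lemma exists_spanning_card_eq_maxSep [CompactSpace X] (g : X → X) (n : ℕ) (hε : 0 < ε) :
    ∃ E : Finset X, E.card = maxSep g univ n ε ∧ ∀ x, ∃ e ∈ E, dynDist g n x e < ε := by
  classical
  obtain ⟨E, -, hcard, hE⟩ := exists_isDynSeparated_card_eq_maxSep g univ n hε
  refine ⟨E, hcard, fun x => ?_⟩
  by_contra! hfar
  have hx : x ∉ E := fun hx => by linarith [hfar x hx, dynDist_self (g := g) (n := n) x]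
  have hsep : IsDynSeparated g n ε (insert x E) := by
    intro y hy z hz hyz
    rcases Finset.mem_insert.1 hy with rfl | hyE <;> rcases Finset.mem_insert.1 hz with rfl | hzE
    · exact absurd rfl hyz
    · exact hfar z hzE
    · exact dynDist_comm (g := g) y _ ▸ hfar y hyE
    · exact hE y hyE z hzE hyz
  have := card_le_maxSep hε (subset_univ _) hsep
  rw [Finset.card_insert_of_notMem hx, hcard] at this
  omega

lemma maxSep_le_maxSep_of_dynDist_le [CompactSpace Y] {s : Set X} {t : Set Y} {e : X → Y}
    (hε : 0 < ε) (hst : MapsTo e s t)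
    (he : ∀ x ∈ s, ∀ y ∈ s, dynDist g n x y ≤ dynDist h n (e x) (e y)) :
    maxSep g s n ε ≤ maxSep h t n ε := by
  classical
  refine maxSep_le fun E hEs hE => ?_
  have hinj : InjOn e E := fun x hx y hy hxy => by
    by_contra hne
    have := (hE x hx y hy hne).trans (he x (hEs hx) y (hEs hy))
    rw [hxy, dynDist_self] at this
    linarith
  rw [← Finset.card_image_of_injOn hinj]
  refine card_le_maxSep hε (by simpa using hst.mono_left hEs |>.image_subset) ?_
  simp only [IsDynSeparated, Finset.mem_image]
  rintro _ ⟨x, hx, rfl⟩ _ ⟨y, hy, rfl⟩ hne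
  exact (hE x hx y hy (ne_of_apply_ne e hne)).trans (he x (hEs hx) y (hEs hy))

end DynamicSeparation

section ProductSeparation

variable {X Y : Type*} [MetricSpace X] [MetricSpace Y] [CompactSpace X] [CompactSpace Y]
  {g : X → X} {h : Y → Y} {n : ℕ} {ε : ℝ}

lemma mul_maxSep_le_maxSep_prodMap (hε : 0 < ε) (s : Set X) (t : Set Y) :
    maxSep g s n ε * maxSep h t n ε ≤ maxSep (Prod.map g h) (s ×ˢ t) n ε := by
  obtain ⟨E, hEs, hEcard, hE⟩ := exists_isDynSeparated_card_eq_maxSep g s n hε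
  obtain ⟨F, hFt, hFcard, hF⟩ := exists_isDynSeparated_card_eq_maxSep h t n hε
  rw [← hEcard, ← hFcard, ← Finset.card_product]
  refine card_le_maxSep hε (by simpa using prod_mono hEs hFt) fun p hp q hq hpq => ?_
  rw [Finset.mem_product] at hp hq
  rw [dynDist_prodMap]
  by_cases h₁ : p.1 = q.1
  · exact le_max_of_le_right (hF _ hp.2 _ hq.2 fun h₂ => hpq (Prod.ext h₁ h₂))
  · exact le_max_of_le_left (hE _ hp.1 _ hq.1 h₁)

lemma maxSep_prodMap_le_mul (hε : 0 < ε) :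
    maxSep (Prod.map g h) univ n ε ≤ maxSep g univ n (ε / 2) * maxSep h univ n (ε / 2) := by
  obtain ⟨E, hEcard, hE⟩ := exists_spanning_card_eq_maxSep g n (half_pos hε)
  obtain ⟨F, hFcard, hF⟩ := exists_spanning_card_eq_maxSep h n (half_pos hε)
  choose π₁ hπ₁E hπ₁ using hE
  choose π₂ hπ₂F hπ₂ using hF
  refine maxSep_le fun P _ hP => ?_
  rw [← hEcard, ← hFcard, ← Finset.card_product]
  refine Finset.card_le_card_of_injOn (fun p => (π₁ p.1, π₂ p.2))
    (fun p _ => Finset.mem_product.2 ⟨hπ₁E _, hπ₂F _⟩) fun p hp q hq hpq => ?_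
  by_contra hne
  have := hP p hp q hq hne
  rw [dynDist_prodMap] at this
  simp only [Prod.mk.injEq] at hpq
  have h₁ := dynDist_lt_of_lt_half (hπ₁ p.1) (hpq.1 ▸ hπ₁ q.1)
  have h₂ := dynDist_lt_of_lt_half (hπ₂ p.2) (hpq.2 ▸ hπ₂ q.2)
  linarith [max_lt h₁ h₂]

lemma maxSep_prodMap_le_two_mul [LinearOrder X] (hε : 0 < ε) :
    maxSep (Prod.map g g) univ n ε ≤ 2 * maxSep (Prod.map g g) {p | p.1 ≤ p.2} n ε := by
  classical
  refine maxSep_le fun E _ hE => ?_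
  have below : (E.filter fun p => p.1 ≤ p.2).card ≤ maxSep (Prod.map g g) {p | p.1 ≤ p.2} n ε :=
    card_le_maxSep hε (by simp [subset_def]) (hE.subset (Finset.filter_subset _ _))
  have above : (E.filter fun p => ¬p.1 ≤ p.2).card ≤
      maxSep (Prod.map g g) {p | p.1 ≤ p.2} n ε :=
    calc _ ≤ maxSep (Prod.map g g) {p | ¬p.1 ≤ p.2} n ε :=
          card_le_maxSep hε (by simp [subset_def]) (hE.subset (Finset.filter_subset _ _))
      _ ≤ _ := maxSep_le_maxSep_of_dynDist_le (e := Prod.swap) hε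
          (fun _ hp => (not_le.1 hp).le) fun p _ q _ => (dynDist_prodMap_swap p q).ge
  rw [← Finset.card_filter_add_card_filter_not (s := E) (p := fun p => p.1 ≤ p.2)]
  omega

end ProductSeparation

namespace Subcontinua

lemma coe_inducedC_iterate {X : Type*} [TopologicalSpace X] {g : X → X} (hg : Continuous g)
    (k : ℕ) (A : Subcontinua X) :
    (((inducedC g hg)^[k] A).1 : Set X) = g^[k] '' A.1 := by
  induction k with
  | zero => simp
  | succ k ih =>
    rw [Function.iterate_succ_apply', Function.iterate_succ', image_comp, ← ih]
    rfl

section Endpoints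

variable {X : Type*} [ConditionallyCompleteLinearOrder X] [TopologicalSpace X] [OrderTopology X]

noncomputable def endpoints (A : Subcontinua X) : X × X :=
  (sInf (A.1 : Set X), sSup (A.1 : Set X))

lemma coe_eq_Icc_endpoints (A : Subcontinua X) :
    (A.1 : Set X) = Icc A.endpoints.1 A.endpoints.2 :=
  eq_Icc_of_connected_compact A.2 A.1.isCompact

lemma endpoints_fst_le_snd (A : Subcontinua X) : A.endpoints.1 ≤ A.endpoints.2 :=
  csInf_le_csSup A.1.nonempty A.1.isCompact.bddBelow A.1.isCompact.bddAbove

variable [DenselyOrdered X]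

lemma endpoints_eq_of_monotone {g : X → X} (hg : Continuous g) (hm : Monotone g)
    {A B : Subcontinua X} (hAB : (B.1 : Set X) = g '' A.1) :
    B.endpoints = Prod.map g g A.endpoints := by
  rw [coe_eq_Icc_endpoints A, hg.continuousOn.image_Icc_of_monotoneOn A.endpoints_fst_le_snd
    (hm.monotoneOn _)] at hAB
  have hle := hm A.endpoints_fst_le_snd
  rw [endpoints, hAB, csInf_Icc hle, csSup_Icc hle]
  rfl

lemma endpoints_eq_of_antitone {g : X → X} (hg : Continuous g) (hm : Antitone g)
    {A B : Subcontinua X} (hAB : (B.1 : Set X) = g '' A.1) :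
    B.endpoints = (Prod.map g g A.endpoints).swap := by
  rw [coe_eq_Icc_endpoints A, hg.continuousOn.image_Icc_of_antitoneOn A.endpoints_fst_le_snd
    (hm.antitoneOn _)] at hAB
  have hle := hm A.endpoints_fst_le_snd
  rw [endpoints, hAB, csInf_Icc hle, csSup_Icc hle]
  rfl

noncomputable def uIcc (p : X × X) : Subcontinua X :=
  ⟨⟨⟨Set.uIcc p.1 p.2, isCompact_uIcc⟩, nonempty_uIcc⟩, nonempty_uIcc, isPreconnected_uIcc⟩

lemma endpoints_uIcc {p : X × X} (hp : p.1 ≤ p.2) : (uIcc p).endpoints = p := by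
  simp [endpoints, uIcc, Set.uIcc_of_le hp, csInf_Icc hp, csSup_Icc hp]

lemma range_endpoints : range (endpoints (X := X)) = {p | p.1 ≤ p.2} :=
  Subset.antisymm (range_subset_iff.2 endpoints_fst_le_snd) fun p hp => ⟨uIcc p, endpoints_uIcc hp⟩

end Endpoints

lemma isometry_endpoints : Isometry (endpoints : Subcontinua unitInterval → _) :=
  Isometry.of_dist_eq fun A B => by
    rw [Subtype.dist_eq, NonemptyCompacts.dist_eq, coe_eq_Icc_endpoints A, coe_eq_Icc_endpoints B,
      hausdorffDist_Icc_of_ordConnected A.endpoints_fst_le_snd B.endpoints_fst_le_snd,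
      Prod.dist_eq]

instance : CompactSpace (Subcontinua unitInterval) :=
  ⟨isometry_endpoints.isEmbedding.isCompact_iff.2 <| by
    rw [image_univ, range_endpoints]
    exact (isClosed_le continuous_fst continuous_snd).isCompact⟩

lemma dynDist_inducedC (f : unitInterval ≃ₜ unitInterval) (n : ℕ) (A B : Subcontinua unitInterval) :
    dynDist (inducedC f f.continuous) n A B = dynDist (Prod.map f f) n A.endpoints B.endpoints :=
  dynDist_congr fun k _ => by
    have hk := f.continuous.iterate k
    rw [← isometry_endpoints.dist_eq, Prod.map_iterate]
    rcases hk.strictMono_of_inj_boundedOrder' (f.injective.iterate k) with hm | hm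
    · rw [endpoints_eq_of_monotone hk hm.monotone (coe_inducedC_iterate _ k A),
        endpoints_eq_of_monotone hk hm.monotone (coe_inducedC_iterate _ k B)]
    · rw [endpoints_eq_of_antitone hk hm.antitone (coe_inducedC_iterate _ k A),
        endpoints_eq_of_antitone hk hm.antitone (coe_inducedC_iterate _ k B), Prod.dist_eq,
        Prod.dist_eq, max_comm]
      rfl

end Subcontinua

section PolynomialGrowth

noncomputable def polyGrowth (s : ℕ → ℕ) : ℝ≥0∞ :=
  atTop.limsup fun n => ENNReal.ofReal (Real.log (s n) / Real.log n)

lemma polEnt_eq_iSup_polyGrowth {X : Type*} [MetricSpace X] (g : X → X) (s : Set X) :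
    polEnt g s = ⨆ (ε : ℝ) (_ : 0 < ε), polyGrowth fun n => maxSep g s n ε :=
  rfl

lemma polyGrowth_pow (s : ℕ → ℕ) (k : ℕ) :
    polyGrowth (fun n => s n ^ k) = k * polyGrowth s := by
  unfold polyGrowth
  rw [← ENNReal.limsup_const_mul_of_ne_top (ENNReal.natCast_ne_top k)]
  congr with n
  rw [Nat.cast_pow, Real.log_pow, mul_div_assoc, ENNReal.ofReal_mul (Nat.cast_nonneg k),
    ENNReal.ofReal_natCast]

lemma Real.log_natCast_le_log_natCast {a b : ℕ} (h : a ≤ b) : Real.log a ≤ Real.log b := by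
  rcases a.eq_zero_or_pos with rfl | ha
  · simpa using Real.log_natCast_nonneg b
  · exact Real.log_le_log (by exact_mod_cast ha) (by exact_mod_cast h)

lemma polyGrowth_le_of_le_mul {s t : ℕ → ℕ} (C : ℕ) (h : ∀ n, s n ≤ C * t n) :
    polyGrowth s ≤ polyGrowth t := by
  have hlog (n : ℕ) : Real.log (s n) ≤ Real.log (t n) + Real.log C := by
    rcases (C * t n).eq_zero_or_pos with h0 | h0
    · have hs : s n = 0 := by simpa [h0] using h n
      rw [hs, Nat.cast_zero, Real.log_zero]
      exact add_nonneg (Real.log_natCast_nonneg _) (Real.log_natCast_nonneg _)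
    · obtain ⟨hC, ht⟩ := Nat.mul_ne_zero_iff.1 h0.ne'
      have := Real.log_natCast_le_log_natCast (h n)
      rw [Nat.cast_mul, Real.log_mul (by exact_mod_cast hC) (by exact_mod_cast ht)] at this
      linarith
  have hC : Tendsto (fun n : ℕ => ENNReal.ofReal (Real.log C / Real.log n)) atTop (𝓝 0) := by
    simpa using ENNReal.tendsto_ofReal <| tendsto_const_nhds.div_atTop
      (Real.tendsto_log_atTop.comp tendsto_natCast_atTop_atTop)
  calc polyGrowth s
      ≤ atTop.limsup ((fun n => ENNReal.ofReal (Real.log (t n) / Real.log n)) +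
          fun n : ℕ => ENNReal.ofReal (Real.log C / Real.log n)) :=
        limsup_le_limsup <| Eventually.of_forall fun n => by
          refine (ENNReal.ofReal_le_ofReal ?_).trans ENNReal.ofReal_add_le
          rw [← add_div]
          exact div_le_div_of_nonneg_right (hlog n) (Real.log_natCast_nonneg n)
    _ = polyGrowth t := ENNReal.limsup_add_of_right_tendsto_zero hC _

end PolynomialGrowth

section Interval

variable (f : unitInterval ≃ₜ unitInterval) {ε : ℝ}

lemma maxSep_inducedC_le_sq (hε : 0 < ε) (n : ℕ) :
    maxSep (inducedC f f.continuous) univ n ε ≤ maxSep f univ n (ε / 2) ^ 2 :=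
  calc maxSep (inducedC f f.continuous) univ n ε
      ≤ maxSep (Prod.map f f) univ n ε :=
        maxSep_le_maxSep_of_dynDist_le hε (mapsTo_univ _ _) fun A _ B _ =>
          (Subcontinua.dynDist_inducedC f n A B).le
    _ ≤ maxSep f univ n (ε / 2) ^ 2 := (maxSep_prodMap_le_mul hε).trans_eq (sq _).symm

lemma sq_maxSep_le_two_mul_maxSep_inducedC (hε : 0 < ε) (n : ℕ) :
    maxSep f univ n ε ^ 2 ≤ 2 * maxSep (inducedC f f.continuous) univ n ε :=
  calc maxSep f univ n ε ^ 2
      ≤ maxSep (Prod.map f f) univ n ε := by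
        rw [sq, ← univ_prod_univ]
        exact mul_maxSep_le_maxSep_prodMap hε _ _
    _ ≤ 2 * maxSep (Prod.map f f) {p | p.1 ≤ p.2} n ε := maxSep_prodMap_le_two_mul hε
    _ ≤ 2 * maxSep (inducedC f f.continuous) univ n ε :=
        Nat.mul_le_mul_left 2 <| maxSep_le_maxSep_of_dynDist_le (e := Subcontinua.uIcc) hε
          (mapsTo_univ _ _) fun p hp q hq => by
            rw [Subcontinua.dynDist_inducedC, Subcontinua.endpoints_uIcc hp,
              Subcontinua.endpoints_uIcc hq]

end Interval

theorem stmt14 (f : ↥unitInterval ≃ₜ ↥unitInterval) :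
    polEnt (inducedC ⇑f f.continuous) Set.univ = 2 * polEnt ⇑f Set.univ := by
  simp only [polEnt_eq_iSup_polyGrowth, ENNReal.mul_iSup]
  refine le_antisymm (iSup₂_le fun ε hε => ?_) (iSup₂_le fun ε hε => ?_)
  · calc polyGrowth (fun n => maxSep (inducedC f f.continuous) univ n ε)
        ≤ polyGrowth fun n => maxSep f univ n (ε / 2) ^ 2 :=
          polyGrowth_le_of_le_mul 1 fun n => by simpa using maxSep_inducedC_le_sq f hε n
      _ = 2 * polyGrowth fun n => maxSep f univ n (ε / 2) := by
          rw [polyGrowth_pow, Nat.cast_ofNat]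
      _ ≤ ⨆ (δ : ℝ) (_ : 0 < δ), 2 * polyGrowth fun n => maxSep f univ n δ :=
          le_iSup₂ (f := fun δ _ => 2 * polyGrowth fun n => maxSep f univ n δ) _ (half_pos hε)
  · calc 2 * polyGrowth (fun n => maxSep f univ n ε)
        = polyGrowth fun n => maxSep f univ n ε ^ 2 := by rw [polyGrowth_pow, Nat.cast_ofNat]
      _ ≤ polyGrowth fun n => maxSep (inducedC f f.continuous) univ n ε :=
          polyGrowth_le_of_le_mul 2 (sq_maxSep_le_two_mul_maxSep_inducedC f hε)
      _ ≤ _ := le_iSup₂ (f := fun δ _ => polyGrowth fun n =>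
          maxSep (inducedC f f.continuous) univ n δ) ε hε
end

section
/- Let f : S¹ → S¹ be a circle homeomorphism with exactly one non-wandering point, which is then a fixed point a (so NW(f) = Fix(f) = {a}). Then the non-wandering set of the induced map C(f) on the hyperspace of subcontinua consists of exactly two points: the singleton {a} and the whole circle S¹. -/
/-!
Cutting the circle at `a` turns `f` into a fixed-point-free homeomorphism `h` of `ℝ`, which is
increasing and, after reversing the orientation if necessary, satisfies `t < h t`. The singleton
`{a}` and the whole circle are fixed by `C(f)`. Any other subcontinuum `A` has an end point
`q ≠ a`: its last point if `a ∉ A`, otherwise an endpoint of a gap of `A`. The subcontinua `B`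
near `A` meet an open arc `U ∋ q` and avoid a closed arc `K` disjoint from `A`. Since `h` pushes
every point forward, no iterate `fⁿ(B)`, `n ≥ 1`, can again meet `U` and avoid `K`: if `a ∉ A`,
`fⁿ(U)` lies inside `K`; if `a ∈ A`, the connectedness of `B` enters through the fact that two
points separate the circle. Hence `A` is wandering.
-/

open Filter Topology TopologicalSpace Set
open scoped ENNReal

open Function

theorem mem_nonWandering_of_isFixedPt {Y : Type*} [TopologicalSpace Y] {F : Y → Y} {y : Y}
    (hy : IsFixedPt F y) : y ∈ nonWandering F := fun _ hU =>
  ⟨1, le_rfl, y, ⟨y, mem_of_mem_nhds hU, hy⟩, mem_of_mem_nhds hU⟩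

theorem inducedC_iterate_coe {X : Type*} [TopologicalSpace X] {f : X → X} (hf : Continuous f)
    (A : Subcontinua X) (n : ℕ) :
    (((inducedC f hf)^[n] A).1 : Set X) = f^[n] '' (A.1 : Set X) := by
  have : Semiconj (fun B : Subcontinua X => (B.1 : Set X)) (inducedC f hf) (image f) :=
    fun _ => rfl
  rw [(this.iterate_right n).eq, image_iterate_eq]

/-- `{B | (B ∩ U).Nonempty ∧ B ⊆ W}` is a basic neighbourhood of `A` in the Vietoris topology,
which on compact sets is the topology of the Hausdorff metric. -/
def IsVietorisWandering {X : Type*} [TopologicalSpace X] (f : X → X) (A : Set X) : Prop :=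
  ∃ U W : Set X, IsOpen U ∧ IsOpen W ∧ (A ∩ U).Nonempty ∧ A ⊆ W ∧
    ∀ B : Set X, IsPreconnected B → (B ∩ U).Nonempty → B ⊆ W →
      ∀ n, 1 ≤ n → (f^[n] '' B ∩ U).Nonempty → ¬ f^[n] '' B ⊆ W

theorem notMem_nonWandering_inducedC {X : Type*} [MetricSpace X] {f : X → X}
    (hf : Continuous f) {A : Subcontinua X} (hA : IsVietorisWandering f (A.1 : Set X)) :
    A ∉ nonWandering (inducedC f hf) := by
  obtain ⟨U, W, hU, hW, hAU, hAW, hwander⟩ := hA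
  let V : Set (Subcontinua X) := {B | ((B.1 : Set X) ∩ U).Nonempty ∧ (B.1 : Set X) ⊆ W}
  have hV : V ∈ 𝓝 A :=
    (((NonemptyCompacts.isOpen_inter_nonempty_of_isOpen hU).inter
      (NonemptyCompacts.isOpen_subsets_of_isOpen hW)).preimage continuous_subtype_val).mem_nhds
      ⟨hAU, hAW⟩
  intro hNW
  obtain ⟨n, hn, _, ⟨B, hBV, rfl⟩, hnV⟩ := hNW V hV
  rw [mem_ofPred_eq, inducedC_iterate_coe] at hnV
  exact hwander _ B.2.isPreconnected hBV.1 hBV.2 n hn hnV.1 hnV.2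

namespace Real

theorem two_mul_arctan_mem_Ioc (t : ℝ) : 2 * arctan t ∈ Ioc (-π) π := by
  constructor <;> linarith [neg_pi_div_two_lt_arctan t, arctan_lt_pi_div_two t]

theorem forall_lt_or_forall_gt_of_forall_ne {h : ℝ → ℝ} (hc : Continuous h)
    (hfix : ∀ t, h t ≠ t) : (∀ t, t < h t) ∨ ∀ t, h t < t := by
  by_contra! H
  obtain ⟨⟨s, hs⟩, ⟨t, ht⟩⟩ := H
  obtain ⟨x, hx⟩ := intermediate_value_univ s t (hc.sub continuous_id)
    (show (0 : ℝ) ∈ Icc (h s - s) (h t - t) from ⟨by linarith, by linarith⟩)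
  exact hfix x (sub_eq_zero.mp hx)

theorem strictMono_of_forall_ne (h : ℝ ≃ₜ ℝ) (hfix : ∀ t, h t ≠ t) : StrictMono h := by
  refine (h.continuous.strictMono_of_inj h.injective).resolve_right fun hanti => ?_
  rcases forall_lt_or_forall_gt_of_forall_ne h.continuous hfix with H | H
  · exact (H (h 0)).not_gt (hanti (H 0))
  · exact (H (h 0)).not_gt (hanti (H 0))

end Real

theorem Function.apply_le_iterate_of_id_le {α : Type*} [Preorder α] {h : α → α} (hid : id ≤ h)
    {n : ℕ} (hn : 1 ≤ n) (t : α) : h t ≤ h^[n] t := by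
  obtain ⟨m, rfl⟩ := Nat.exists_eq_add_of_le' hn
  rw [iterate_succ_apply]
  exact Function.id_le_iterate_of_id_le hid m (h t)

theorem exists_mem_Ioo_lt_apply {h : ℝ → ℝ} {p q b : ℝ} (hc : ContinuousAt h q) (hq : b < h q)
    (hpq : p < q) : ∃ c ∈ Ioo p q, b < h c :=
  (((hc.eventually (lt_mem_nhds hq)).filter_mono nhdsWithin_le_nhds).and
    (Ioo_mem_nhdsLT hpq)).exists.imp fun _ hc => ⟨hc.2, hc.1⟩

theorem IsClosed.exists_gap {T : Set ℝ} (hT : IsClosed T) (hne : T.Nonempty) (hT' : T ≠ univ) :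
    ∃ p q, p < q ∧ (p ∈ T ∨ q ∈ T) ∧ ∀ t ∈ Ioo p q, t ∉ T := by
  obtain ⟨t₀, ht₀⟩ := (ne_univ_iff_exists_notMem T).mp hT'
  obtain ⟨t, htT⟩ := hne
  rcases lt_or_gt_of_ne (ne_of_mem_of_not_mem htT ht₀) with hlt | hgt
  · have hbdd : BddAbove (T ∩ Iic t₀) := ⟨t₀, fun _ hx => hx.2⟩
    have hmem := (hT.inter isClosed_Iic).csSup_mem ⟨t, htT, hlt.le⟩ hbdd
    refine ⟨_, t₀, hmem.2.lt_of_ne fun h => ht₀ (h ▸ hmem.1), Or.inl hmem.1, fun x hx hxT => ?_⟩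
    exact hx.1.not_ge (le_csSup hbdd ⟨hxT, hx.2.le⟩)
  · have hbdd : BddBelow (T ∩ Ici t₀) := ⟨t₀, fun _ hx => hx.2⟩
    have hmem := (hT.inter isClosed_Ici).csInf_mem ⟨t, htT, hgt.le⟩ hbdd
    refine ⟨t₀, _, hmem.2.lt_of_ne' fun h => ht₀ (h ▸ hmem.1), Or.inr hmem.1, fun x hx hxT => ?_⟩
    exact hx.2.not_ge (csInf_le hbdd ⟨hxT, hx.1.le⟩)

theorem Topology.IsEmbedding.exists_homeomorph_semiconj {X Y : Type*} [TopologicalSpace X]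
    [TopologicalSpace Y] {e : Y → X} (he : IsEmbedding e) (f : X ≃ₜ X)
    (hf : ∀ x, x ∈ range e ↔ f x ∈ range e) : ∃ h : Y ≃ₜ Y, Semiconj e h f := by
  let E := he.toHomeomorph
  refine ⟨(E.trans (f.subtype hf)).trans E.symm, fun y => ?_⟩
  exact congrArg Subtype.val (E.apply_symm_apply _)

namespace Circle

open Real

theorem isOpenEmbedding_exp_two_mul_arctan : IsOpenEmbedding fun t => exp (2 * arctan t) := by
  have harctan : IsOpenEmbedding fun t => 2 * arctan t :=
    (Homeomorph.mulLeft₀ (2 : ℝ) two_ne_zero).isOpenEmbedding.comp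
      (tanPartialHomeomorph.symm.isOpenEmbedding rfl)
  refine (isLocalHomeomorph_circleExp.comp harctan.isLocalHomeomorph).isOpenEmbedding_of_injective
    fun s t hst => arctan_strictMono.injective ?_
  have := exp_injOn_Ioc (by linarith) (two_mul_arctan_mem_Ioc s) (two_mul_arctan_mem_Ioc t) hst
  linarith

theorem range_exp_two_mul_arctan : range (fun t => exp (2 * arctan t)) = {exp π}ᶜ := by
  ext z
  constructor
  · rintro ⟨t, rfl⟩ heq
    have := exp_injOn_Ioc (by linarith) (two_mul_arctan_mem_Ioc t)
      ⟨by linarith [pi_pos], le_rfl⟩ heq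
    linarith [arctan_lt_pi_div_two t]
  · intro hz
    have harg : Complex.arg z < π :=
      (Complex.arg_le_pi z).lt_of_ne fun h => hz (by rw [← h, exp_arg]; rfl)
    refine ⟨tan (Complex.arg z / 2), ?_⟩
    have : arctan (tan (Complex.arg z / 2)) = Complex.arg z / 2 :=
      arctan_tan (by linarith [Complex.neg_pi_lt_arg z]) (by linarith)
    simp only [this, mul_div_cancel₀ _ (two_ne_zero (α := ℝ)), exp_arg]

theorem exists_isOpenEmbedding_range_eq_compl (a : Circle) :
    ∃ e : ℝ → Circle, IsOpenEmbedding e ∧ range e = {a}ᶜ := by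
  let rot := Homeomorph.mulLeft (a * (exp π)⁻¹)
  refine ⟨rot ∘ fun t => exp (2 * arctan t),
    rot.isOpenEmbedding.comp isOpenEmbedding_exp_two_mul_arctan, ?_⟩
  rw [range_comp, range_exp_two_mul_arctan, rot.image_compl, image_singleton]
  simp [rot]

end Circle

theorem exists_semiconj_of_fixedPoints_eq_singleton (f : Circle ≃ₜ Circle) (a : Circle)
    (ha : fixedPoints f = {a}) :
    ∃ (e : ℝ → Circle) (h : ℝ ≃ₜ ℝ), IsOpenEmbedding e ∧ range e = {a}ᶜ ∧
      Semiconj e h f ∧ StrictMono h ∧ ∀ t, t < h t := by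
  obtain ⟨e, he, hrange⟩ := Circle.exists_isOpenEmbedding_range_eq_compl a
  have hfa : f a = a := (ha ▸ rfl : a ∈ fixedPoints f)
  obtain ⟨h, hconj⟩ := he.isEmbedding.exists_homeomorph_semiconj f fun x => by
    simp [hrange, f.injective.ne_iff' hfa]
  have hfix : ∀ t, h t ≠ t := fun t ht => by
    have : e t ∈ fixedPoints f := by rw [mem_fixedPoints, IsFixedPt, ← hconj, ht]
    exact (hrange ▸ mem_range_self t : e t ∈ ({a}ᶜ : Set Circle)) (ha ▸ this)
  have hmono := Real.strictMono_of_forall_ne h hfix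
  rcases Real.forall_lt_or_forall_gt_of_forall_ne h.continuous hfix with hlt | hgt
  · exact ⟨e, h, he, hrange, hconj, hmono, hlt⟩
  let σ := Homeomorph.neg ℝ
  refine ⟨e ∘ σ, (σ.trans h).trans σ, he.comp σ.isOpenEmbedding, ?_, fun t => ?_,
    fun s t hst => neg_lt_neg (hmono (neg_lt_neg hst)), fun t => lt_neg_of_lt_neg (hgt (-t))⟩
  · rw [σ.surjective.range_comp, hrange]
  · simpa [σ] using hconj (-t)

theorem exists_apply_eq_of_iterate_eq {X Y : Type*} {e : Y → X} {g : Y → Y} {f : X → X}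
    (he : Injective e) (hconj : Semiconj e g f)
    (hback : MapsTo f (range e)ᶜ (range e)ᶜ) {z : X} {n : ℕ} {v : Y} (hz : f^[n] z = e v) :
    ∃ s, z = e s ∧ g^[n] s = v := by
  obtain ⟨s, rfl⟩ : z ∈ range e := by
    by_contra hz'
    exact hback.iterate n hz' ⟨v, hz.symm⟩
  exact ⟨s, rfl, he ((hconj.iterate_right n s).trans hz)⟩

section ArcDynamics

variable {X : Type*} {e : ℝ → X} {f : X → X} {h : ℝ ≃ₜ ℝ}

variable [TopologicalSpace X]

theorem IsPreconnected.apply_left_mem_or_apply_right_mem [T2Space X] (he : IsOpenEmbedding e)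
    {B : Set X} (hB : IsPreconnected B) {x y s u : ℝ} (hs : s ∈ Ioo x y) (hu : u ∉ Icc x y)
    (hsB : e s ∈ B) (huB : e u ∈ B) : e x ∈ B ∨ e y ∈ B := by
  by_contra! hxy
  have hcover : B ⊆ e '' Ioo x y ∪ (e '' Icc x y)ᶜ := by
    rintro z hz
    by_cases hzI : z ∈ e '' Icc x y
    · obtain ⟨t, ht, rfl⟩ := hzI
      refine Or.inl ⟨t, ⟨ht.1.lt_of_ne ?_, ht.2.lt_of_ne ?_⟩, rfl⟩ <;> rintro rfl
      exacts [hxy.1 hz, hxy.2 hz]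
    · exact Or.inr hzI
  obtain ⟨z, -, ⟨t, ht, rfl⟩, hzI⟩ := hB _ _ (he.isOpenMap _ isOpen_Ioo)
    (isCompact_Icc.image he.continuous).isClosed.isOpen_compl hcover
    ⟨e s, hsB, s, hs, rfl⟩ ⟨e u, huB, fun ⟨t, ht, htu⟩ => hu (he.injective htu ▸ ht)⟩
  exact hzI ⟨t, Ioo_subset_Icc_self ht, rfl⟩

variable (he : IsOpenEmbedding e) (hconj : Semiconj e h f) (hh : StrictMono h)
  (hlt : ∀ t, t < h t)
include he hconj hh hlt

theorem isVietorisWandering_of_subset_range {A : Set X} (hA : IsCompact A) (hne : A.Nonempty)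
    (hAe : A ⊆ range e) : IsVietorisWandering f A := by
  obtain ⟨m, hmA, hmax⟩ :=
    ((he.isInducing.isCompact_preimage_iff hAe).mpr hA).exists_isGreatest (hne.preimage' hAe)
  obtain ⟨c, hc, hmc⟩ := exists_mem_Ioo_lt_apply h.continuous.continuousAt (hlt m) (sub_one_lt m)
  refine ⟨e '' Ioi c, e '' Iio (h c), he.isOpenMap _ isOpen_Ioi, he.isOpenMap _ isOpen_Iio,
    ⟨e m, hmA, m, hc.2, rfl⟩, ?_, ?_⟩
  · intro z hz
    obtain ⟨t, rfl⟩ := hAe hz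
    exact ⟨t, (hmax hz).trans_lt hmc, rfl⟩
  · rintro B - ⟨-, huB, u, hcu : c < u, rfl⟩ - n hn - hW
    have := hW (mem_image_of_mem _ huB)
    rw [← hconj.iterate_right n u, he.injective.mem_set_image] at this
    exact (this : h^[n] u < h c).not_ge
      ((hh hcu).le.trans (apply_le_iterate_of_id_le (fun t => (hlt t).le) hn u))

variable [T2Space X]

theorem isVietorisWandering_of_gap_left (hback : MapsTo f (range e)ᶜ (range e)ᶜ) {A : Set X}
    {p q : ℝ} (hpq : p < q) (hq : e q ∈ A) (hgap : ∀ t ∈ Ioo p q, e t ∉ A) :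
    IsVietorisWandering f A := by
  obtain ⟨c, hc, hqc⟩ := exists_mem_Ioo_lt_apply h.continuous.continuousAt (hlt q) hpq
  obtain ⟨c', hpc', hc'c⟩ := exists_between hc.1
  refine ⟨e '' Ioo c (h c), (e '' Icc c' c)ᶜ, he.isOpenMap _ isOpen_Ioo,
    (isCompact_Icc.image he.continuous).isClosed.isOpen_compl, ⟨e q, hq, q, ⟨hc.2, hqc⟩, rfl⟩,
    ?_, ?_⟩
  · rintro _ hzA ⟨t, ht, rfl⟩
    exact hgap t ⟨hpc'.trans_le ht.1, ht.2.trans_lt hc.2⟩ hzA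
  rintro B hB ⟨-, huB, u, hu, rfl⟩ hBW n hn ⟨-, ⟨z, hzB, rfl⟩, v, hv, hzv⟩ hnW
  obtain ⟨s, rfl, rfl⟩ := exists_apply_eq_of_iterate_eq he.injective hconj hback hzv.symm
  obtain ⟨r, hr⟩ := (h.surjective.iterate n) c'
  have hsc : s < c :=
    hh.lt_iff_lt.mp ((apply_le_iterate_of_id_le (fun t => (hlt t).le) hn s).trans_lt hv.2)
  have hsc' : s < c' := not_le.mp fun h' => hBW hzB ⟨s, ⟨h', hsc.le⟩, rfl⟩
  have hrs : r < s := (hh.iterate n).lt_iff_lt.mp (hr ▸ hc'c.trans hv.1)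
  rcases hB.apply_left_mem_or_apply_right_mem he ⟨hrs, hsc'⟩
    (fun h' => (hc'c.trans hu.1).not_ge h'.2) hzB huB with hrB | hc'B
  · exact hnW (mem_image_of_mem _ hrB) ⟨c', ⟨le_rfl, hc'c.le⟩, hr ▸ hconj.iterate_right n r⟩
  · exact hBW hc'B ⟨c', ⟨le_rfl, hc'c.le⟩, rfl⟩

theorem isVietorisWandering_of_gap_right (hback : MapsTo f (range e)ᶜ (range e)ᶜ) {A : Set X}
    {p q : ℝ} (hpq : p < q) (hp : e p ∈ A) (hgap : ∀ t ∈ Ioo p q, e t ∉ A) :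
    IsVietorisWandering f A := by
  obtain ⟨c', hpc', hc'q, hc'p⟩ : ∃ c', p < c' ∧ c' < q ∧ c' < h p := by
    obtain ⟨c', hpc', hc'⟩ := exists_between (lt_min hpq (hlt p))
    exact ⟨c', hpc', lt_min_iff.mp hc'⟩
  obtain ⟨d, hd, hdc'⟩ := exists_mem_Ioo_lt_apply h.continuous.continuousAt hc'p (sub_one_lt p)
  obtain ⟨c, hc'c, hcq⟩ := exists_between hc'q
  refine ⟨e '' Ioo d c', (e '' Icc c' c)ᶜ, he.isOpenMap _ isOpen_Ioo,
    (isCompact_Icc.image he.continuous).isClosed.isOpen_compl, ⟨e p, hp, p, ⟨hd.2, hpc'⟩, rfl⟩,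
    ?_, ?_⟩
  · rintro _ hzA ⟨t, ht, rfl⟩
    exact hgap t ⟨hpc'.trans_le ht.1, ht.2.trans_lt hcq⟩ hzA
  rintro B hB ⟨-, huB, u, hu, rfl⟩ hBW n hn ⟨-, ⟨z, hzB, rfl⟩, v, hv, hzv⟩ hnW
  obtain ⟨s, rfl, rfl⟩ := exists_apply_eq_of_iterate_eq he.injective hconj hback hzv.symm
  obtain ⟨r, hr⟩ := (h.surjective.iterate n) c'
  have hcu : c < h^[n] u := by
    have : c' < h^[n] u :=
      hdc'.trans ((hh hu.1).trans_le (apply_le_iterate_of_id_le (fun t => (hlt t).le) hn u))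
    exact not_le.mp fun h' =>
      hnW (mem_image_of_mem _ huB) ⟨_, ⟨this.le, h'⟩, hconj.iterate_right n u⟩
  have hsr : s < r := (hh.iterate n).lt_iff_lt.mp (hr ▸ hv.2)
  have hru : r < u := (hh.iterate n).lt_iff_lt.mp (hr ▸ hc'c.trans hcu)
  rcases hB.apply_left_mem_or_apply_right_mem he ⟨hru, hu.2.trans hc'c⟩
    (fun h' => hsr.not_ge h'.1) huB hzB with hrB | hcB
  · exact hnW (mem_image_of_mem _ hrB) ⟨c', ⟨le_rfl, hc'c.le⟩, hr ▸ hconj.iterate_right n r⟩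
  · exact hBW hcB ⟨c, ⟨hc'c.le, le_rfl⟩, rfl⟩

theorem isVietorisWandering_of_ne {a : X} (hrange : range e = {a}ᶜ) (hfa : f a = a) {A : Set X}
    (hA : IsCompact A) (hne : A.Nonempty) (hAa : A ≠ {a}) (hAu : A ≠ univ) :
    IsVietorisWandering f A := by
  by_cases haA : a ∈ A
  · have hback : MapsTo f (range e)ᶜ (range e)ᶜ := by
      rw [hrange, compl_compl, mapsTo_singleton, hfa]
      exact mem_singleton a
    have hT : (e ⁻¹' A).Nonempty := by
      obtain ⟨z, hzA, hza⟩ : ∃ z ∈ A, z ≠ a := by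
        by_contra! H
        exact hAa (eq_singleton_iff_unique_mem.mpr ⟨haA, H⟩)
      obtain ⟨t, rfl⟩ : z ∈ range e := hrange ▸ hza
      exact ⟨t, hzA⟩
    have hT' : e ⁻¹' A ≠ univ := by
      obtain ⟨z, hz⟩ := (ne_univ_iff_exists_notMem A).mp hAu
      obtain ⟨t, rfl⟩ : z ∈ range e := hrange ▸ fun hza : z = a => hz (hza ▸ haA)
      exact fun hT => hz (hT ▸ mem_univ t : t ∈ e ⁻¹' A)
    obtain ⟨p, q, hpq, hp | hq, hgap⟩ := (hA.isClosed.preimage he.continuous).exists_gap hT hT'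
    · exact isVietorisWandering_of_gap_right he hconj hh hlt hback hpq hp hgap
    · exact isVietorisWandering_of_gap_left he hconj hh hlt hback hpq hq hgap
  · exact isVietorisWandering_of_subset_range he hconj hh hlt hA hne
      (hrange ▸ fun z hz (hza : z = a) => haA (hza ▸ hz))

end ArcDynamics

theorem stmt17_general (f : Circle ≃ₜ Circle) (a : Circle)
    (ha : Function.fixedPoints ⇑f = {a}) :
    nonWandering (inducedC ⇑f f.continuous) =
      {(⟨⟨⟨{a}, isCompact_singleton⟩, Set.singleton_nonempty a⟩, isConnected_singleton⟩ :
          Subcontinua Circle),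
       (⟨⟨⟨Set.univ, isCompact_univ⟩, Set.univ_nonempty⟩, circle_isConnected_univ⟩ :
          Subcontinua Circle)} := by
  obtain ⟨e, h, he, hrange, hconj, hh, hlt⟩ := exists_semiconj_of_fixedPoints_eq_singleton f a ha
  have hfa : f a = a := (ha ▸ rfl : a ∈ fixedPoints f)
  ext A
  refine ⟨fun hA => ?_, ?_⟩
  · by_contra hA'
    simp only [mem_insert_iff, mem_singleton_iff, not_or] at hA'
    have hAa : (A.1 : Set Circle) ≠ {a} := fun h => hA'.1 (Subtype.ext (NonemptyCompacts.ext h))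
    have hAu : (A.1 : Set Circle) ≠ univ := fun h => hA'.2 (Subtype.ext (NonemptyCompacts.ext h))
    exact notMem_nonWandering_inducedC f.continuous (isVietorisWandering_of_ne he hconj hh hlt
      hrange hfa A.1.isCompact A.1.nonempty hAa hAu) hA
  · rintro (rfl | rfl) <;>
      refine mem_nonWandering_of_isFixedPt (Subtype.ext (NonemptyCompacts.ext ?_))
    · exact (image_singleton (f := f)).trans (congrArg _ hfa)
    · exact image_univ_of_surjective f.surjective

theorem stmt17 (f : Circle ≃ₜ Circle) (a : Circle)
    (hfix : nonWandering ⇑f = Function.fixedPoints ⇑f)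
    (ha : Function.fixedPoints ⇑f = {a}) :
    nonWandering (inducedC ⇑f f.continuous) =
      {(⟨⟨⟨{a}, isCompact_singleton⟩, Set.singleton_nonempty a⟩, isConnected_singleton⟩ :
          Subcontinua Circle),
       (⟨⟨⟨Set.univ, isCompact_univ⟩, Set.univ_nonempty⟩, circle_isConnected_univ⟩ :
          Subcontinua Circle)} :=
  stmt17_general f a ha
end

section
/- Let f be a continuous self-map of a compact metric space X, and let Z ⊆ X \ NW(f) be compact. Then M(Z) := sup_{x ∈ X} #{ n ∈ ℕ : f^n(x) ∈ Z } is finite. -/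
open Filter Topology TopologicalSpace Set
open scoped ENNReal

/-!
Each point of `Z` has an open wandering neighbourhood, and an orbit meets a wandering set at
most once. By compactness `Z` is covered by finitely many, say `C`, such sets, so every orbit
visits `Z` at most `C` times.
-/

def IsWandering {α : Type*} (f : α → α) (U : Set α) : Prop :=
  ∀ n, 1 ≤ n → Disjoint (f^[n] '' U) U

section Wandering

variable {α : Type*} {f : α → α} {U V : Set α}

theorem IsWandering.mono (hU : IsWandering f U) (hVU : V ⊆ U) : IsWandering f V :=
  fun n hn => (hU n hn).mono (image_mono hVU) hVU

theorem IsWandering.subsingleton_setOf_iterate_mem (hU : IsWandering f U) (x : α) :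
    {n | f^[n] x ∈ U}.Subsingleton := by
  have not_twice : ∀ n m, n < m → f^[n] x ∈ U → f^[m] x ∉ U := by
    intro n m hnm hn hm
    refine disjoint_left.1 (hU (m - n) (by omega)) ⟨f^[n] x, hn, ?_⟩ hm
    rw [← Function.iterate_add_apply, Nat.sub_add_cancel hnm.le]
  intro n hn m hm
  by_contra hne
  rcases Nat.lt_or_gt_of_ne hne with h | h
  exacts [not_twice n m h hn hm, not_twice m n h hm hn]

theorem finite_setOf_iterate_mem_and_ncard_le_of_subset_biUnion {ι : Type*} (t : Finset ι)
    {W : ι → Set α} (hW : ∀ i ∈ t, IsWandering f (W i)) {Z : Set α} (hZ : Z ⊆ ⋃ i ∈ t, W i)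
    (x : α) : {n | f^[n] x ∈ Z}.Finite ∧ {n | f^[n] x ∈ Z}.ncard ≤ t.card := by
  have hsub : {n | f^[n] x ∈ Z} ⊆ ⋃ i ∈ t, {n | f^[n] x ∈ W i} := fun n hn => by
    simpa using hZ hn
  have hfin : (⋃ i ∈ t, {n | f^[n] x ∈ W i}).Finite :=
    t.finite_toSet.biUnion fun i hi => ((hW i hi).subsingleton_setOf_iterate_mem x).finite
  refine ⟨hfin.subset hsub, ?_⟩
  calc {n | f^[n] x ∈ Z}.ncard
      ≤ (⋃ i ∈ t, {n | f^[n] x ∈ W i}).ncard := ncard_le_ncard hsub hfin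
    _ ≤ ∑ i ∈ t, {n | f^[n] x ∈ W i}.ncard := t.set_ncard_biUnion_le _
    _ ≤ ∑ _i ∈ t, 1 := Finset.sum_le_sum fun i hi =>
        have hs := (hW i hi).subsingleton_setOf_iterate_mem x
        (ncard_le_one hs.finite).2 hs
    _ = t.card := by rw [Finset.card_eq_sum_ones]

end Wandering

theorem exists_isOpen_isWandering_of_notMem_nonWandering {X : Type*} [TopologicalSpace X]
    {f : X → X} {p : X} (hp : p ∉ nonWandering f) :
    ∃ U, IsOpen U ∧ p ∈ U ∧ IsWandering f U := by
  obtain ⟨U, hU, hUw⟩ : ∃ U ∈ 𝓝 p, IsWandering f U := by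
    by_contra! h
    refine hp fun U hU => ?_
    obtain ⟨n, hn, hmeet⟩ : ∃ n, 1 ≤ n ∧ ¬Disjoint (f^[n] '' U) U := by
      simpa only [IsWandering, not_forall, exists_prop] using h U hU
    exact ⟨n, hn, not_disjoint_iff_nonempty_inter.1 hmeet⟩
  exact ⟨interior U, isOpen_interior, mem_interior_iff_mem_nhds.2 hU,
    hUw.mono interior_subset⟩

theorem stmt18_general {X : Type*} [MetricSpace X] (f : X → X)
    (Z : Set X) (hZc : IsCompact Z) (hZ : ∀ z ∈ Z, z ∉ nonWandering f) :
    ∃ C : ℕ, ∀ x : X, {n : ℕ | f^[n] x ∈ Z}.Finite ∧ {n : ℕ | f^[n] x ∈ Z}.ncard ≤ C := by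
  choose W hWo hmem hWw using fun z : Z =>
    exists_isOpen_isWandering_of_notMem_nonWandering (hZ z z.2)
  obtain ⟨t, ht⟩ := hZc.elim_finite_subcover W hWo fun z hz => mem_iUnion.2 ⟨⟨z, hz⟩, hmem _⟩
  exact ⟨t.card, finite_setOf_iterate_mem_and_ncard_le_of_subset_biUnion t (fun i _ => hWw i) ht⟩

theorem stmt18 {X : Type*} [MetricSpace X] [CompactSpace X] (f : X → X) (hf : Continuous f)
    (Z : Set X) (hZc : IsCompact Z) (hZ : ∀ z ∈ Z, z ∉ nonWandering f) :
    ∃ C : ℕ, ∀ x : X, {n : ℕ | f^[n] x ∈ Z}.Finite ∧ {n : ℕ | f^[n] x ∈ Z}.ncard ≤ C :=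
  stmt18_general f Z hZc hZ
end
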